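/- (a) If X ∈ 𝒦_0 arises from a short exact sequence 0 → J_2 → J_0 → X → 0 with J_2 ∈ ℱ_2 and J_0 ∈ ℱ_0, then F^0 X ≅ F^0 J_0, F^1 X ≅ F^2 J_2, and F^2 X = 0. (b) If Y ∈ 𝒦_2 arises from a short exact sequence 0 → Y → L_2 → L_0 → 0 with L_2 ∈ ℱ_2 and L_0 ∈ ℱ_0, then F^0 Y = 0, F^1 Y ≅ F^0 L_0, and F^2 Y ≅ F^2 L_2. -/

import Mathlib

/-!
Setting: `k` a field, `𝒜` an abelian `k`-linear category, `T : 𝒜` a tilting object,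
`B = End_𝒜(T)ᵒᵖ`, and `e : D(𝒜) ≌ D(Mod B)` the derived equivalence induced by
`F = RHom_𝒜(T,-)` with quasi-inverse `G`.  We write `Fc i` for `F^i = H^i∘F = Ext^i(T,-)`,
`Gc i` for `G_i = H_i∘G`, `Jc i j` for `J^i_j = G_j ∘ F^i`, `Fcal i` for `ℱ_i`,
`Gcal i` for `𝒢_i`, `Kcal0/Kcal1/Kcal2` for `𝒦₀/𝒦₁/𝒦₂` and `Ecal i` for `ℰ_i`.
That `e` is induced by `RHom(T,-)` is encoded by the hypothesis
`hF0 : Fc T e 0 ≅ preadditiveCoyonedaObj (op T)`, i.e. `H⁰∘F∘(single) ≅ Hom_𝒜(T,-)`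
as functors to `Mod B`; the tilting conditions are `hself` (no self-extensions) and
`hdim` (homological dimension at most two).
-/

open CategoryTheory Category Limits DerivedCategory

noncomputable section

universe w w' v u

variable {k : Type*} [Field k]
variable {𝒜 : Type u} [Category.{v} 𝒜] [Abelian 𝒜] [CategoryTheory.Linear k 𝒜]
  [HasDerivedCategory.{w} 𝒜]

/-- `B := End_𝒜(T)ᵒᵖ`, realized as the endomorphism ring of `T` in the opposite category. -/
abbrev EndOp (T : 𝒜) : Type v := End (Opposite.op T)

variable (T : 𝒜) [HasDerivedCategory.{w'} (ModuleCat.{v} (EndOp T))]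
variable (e : DerivedCategory 𝒜 ≌ DerivedCategory (ModuleCat.{v} (EndOp T)))
variable [e.functor.CommShift ℤ] [e.functor.IsTriangulated]
variable [FiniteDimensional k (T ⟶ T)]

/-- `F^i X = H^i(F X) = Ext^i_𝒜(T, X)`, computed via the derived equivalence `e`. -/
def Fc (i : ℤ) : 𝒜 ⥤ ModuleCat.{v} (EndOp T) :=
  DerivedCategory.singleFunctor 𝒜 0 ⋙ e.functor ⋙ DerivedCategory.homologyFunctor _ i

/-- `G_i M = H_i(G M) = H^{-i}(G M)`, where `G` is the quasi-inverse of `F`. -/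
def Gc (i : ℤ) : ModuleCat.{v} (EndOp T) ⥤ 𝒜 :=
  DerivedCategory.singleFunctor _ 0 ⋙ e.inverse ⋙ DerivedCategory.homologyFunctor 𝒜 (-i)

/-- `J^i_j = G_j ∘ F^i : 𝒜 ⥤ 𝒜`. -/
def Jc (i j : ℤ) : 𝒜 ⥤ 𝒜 := Fc T e i ⋙ Gc T e j

/-- `ℱ_i ⊆ 𝒜`: objects `X` with `F^j X = 0` for all `j ≠ i`. -/
def Fcal (i : ℤ) : 𝒜 → Prop := fun X => ∀ j : ℤ, j ≠ i → IsZero ((Fc T e j).obj X)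

/-- `𝒢_i ⊆ mod B`: modules `M` with `G_j M = 0` for all `j ≠ i`. -/
def Gcal (i : ℤ) : ModuleCat.{v} (EndOp T) → Prop :=
  fun M => ∀ j : ℤ, j ≠ i → IsZero ((Gc T e j).obj M)

/-- `𝒦₀`: cokernels of monomorphisms from objects of `ℱ₂` to objects of `ℱ₀`. -/
def Kcal0 : 𝒜 → Prop := fun X =>
  ∃ (J₂ J₀ : 𝒜) (f : J₂ ⟶ J₀), Fcal T e 2 J₂ ∧ Fcal T e 0 J₀ ∧ Mono f ∧
    Nonempty (cokernel f ≅ X)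

/-- `𝒦₂`: kernels of epimorphisms from objects of `ℱ₂` to objects of `ℱ₀`. -/
def Kcal2 : 𝒜 → Prop := fun X =>
  ∃ (L₂ L₀ : 𝒜) (f : L₂ ⟶ L₀), Fcal T e 2 L₂ ∧ Fcal T e 0 L₀ ∧ Epi f ∧
    Nonempty (kernel f ≅ X)

/-- `𝒦₁ = ℱ₁`. -/
def Kcal1 : 𝒜 → Prop := Fcal T e 1

/-- The extension closure of a class of objects in an abelian category: the smallest class
containing the given class and the zero objects which is closed under extensions. -/
inductive ExtensionClosure {C : Type*} [Category C] [Abelian C] (P : C → Prop) : C → Prop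
  | of (X : C) (hX : P X) : ExtensionClosure P X
  | zero (X : C) (hX : IsZero X) : ExtensionClosure P X
  | ext (S : ShortComplex C) (hS : S.ShortExact)
      (h₁ : ExtensionClosure P S.X₁) (h₃ : ExtensionClosure P S.X₃) :
      ExtensionClosure P S.X₂

/-- `ℰ_i`: the extension closure of `𝒦_i`, for `i = 0, 1, 2`. -/
def Ecal : ℕ → 𝒜 → Prop
  | 0 => ExtensionClosure (Kcal0 T e)
  | 1 => ExtensionClosure (Kcal1 T e)
  | 2 => ExtensionClosure (Kcal2 T e)
  | _ => fun _ => False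

/-- `Fac T`: objects admitting an epimorphism from `T^n` for some `n > 0`. -/
def FacT : 𝒜 → Prop := fun X =>
  ∃ n : ℕ, 0 < n ∧
    haveI : HasFiniteBiproducts 𝒜 := HasFiniteBiproducts.of_hasFiniteProducts
    haveI : HasBiproductsOfShape (Fin n) 𝒜 := hasBiproductsOfShape_finite 𝒜
    ∃ p : biproduct (fun _ : Fin n => T) ⟶ X, Epi p

/-- `S` is the trace `τ_𝒞 X` of the class `𝒞 = P` in `X`: the smallest subobject of `X`
through which every morphism from an object of `𝒞` to `X` factors. -/
def IsTrace (P : 𝒜 → Prop) (X : 𝒜) (S : Subobject X) : Prop :=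
  (∀ (C : 𝒜) (f : C ⟶ X), P C → S.Factors f) ∧
  ∀ S' : Subobject X, (∀ (C : 𝒜) (f : C ⟶ X), P C → S'.Factors f) → S ≤ S'

/-- The `End X`-module structure on `unop X ⟶ Y` for `X : Cᵒᵖ` (Mathlib's former `moduleEndLeft`):
`r • f = r.unop ≫ f`. -/
instance moduleEndOpLeftOld {C : Type*} [Category C] [Preadditive C] {X : Cᵒᵖ} {Y : C} :
    Module (End X) (X.unop ⟶ Y) where
  smul r f := r.unop ≫ f
  one_smul f := Category.id_comp f
  mul_smul r s f := by
    change (s ≫ r).unop ≫ f = r.unop ≫ s.unop ≫ f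
    simp
  smul_zero _ := Limits.comp_zero
  smul_add _ _ _ := Preadditive.comp_add _ _ _ _ _ _
  add_smul _ _ _ := Preadditive.add_comp _ _ _ _ _ _
  zero_smul _ := Limits.zero_comp

/-- Mathlib's former `preadditiveCoyonedaObj (X : Cᵒᵖ) : C ⥤ ModuleCat (End X)`. -/
def preadditiveCoyonedaObjOld {C : Type*} [Category C] [Preadditive C] (X : Cᵒᵖ) :
    C ⥤ ModuleCat (End X) where
  obj Y := ModuleCat.of _ (X.unop ⟶ Y)
  map f := ModuleCat.ofHom
    { toFun := fun g => g ≫ f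
      map_add' := fun _ _ => Preadditive.add_comp _ _ _ _ _ _
      map_smul' := fun _ _ => Category.assoc _ _ _ }

/-! `F` is triangulated, so a short exact sequence in `𝒜` yields a long exact sequence of the
`F^i`. Objects of `ℱ₀` and `ℱ₂` have cohomology in a single degree, so in that sequence each map
flanked by two vanishing terms is an isomorphism and each term flanked by two vanishing terms
is zero. -/

namespace DerivedCategory.HomologySequence

variable {C : Type*} [Category* C] [Abelian C] [HasDerivedCategory.{w} C]
  {Δ : Pretriangulated.Triangle (DerivedCategory C)} (hΔ : Δ ∈ distTriang _) (n₀ n₁ : ℤ)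
include hΔ

lemma isIso_homologyMap_mor₁ (h₀ : IsZero ((homologyFunctor C n₀).obj Δ.obj₃))
    (h₁ : IsZero ((homologyFunctor C n₁).obj Δ.obj₃)) (h : n₀ + 1 = n₁ := by lia) :
    IsIso ((homologyFunctor C n₁).map Δ.mor₁) :=
  have : Mono ((homologyFunctor C n₁).map Δ.mor₁) :=
    (mono_homologyMap_mor₁_iff Δ hΔ n₀ n₁ h).2 (h₀.eq_of_src _ _)
  have : Epi ((homologyFunctor C n₁).map Δ.mor₁) :=
    (epi_homologyMap_mor₁_iff Δ hΔ n₁).2 (h₁.eq_of_tgt _ _)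
  isIso_of_mono_of_epi _

lemma isIso_homologyMap_mor₂ (h₀ : IsZero ((homologyFunctor C n₀).obj Δ.obj₁))
    (h₁ : IsZero ((homologyFunctor C n₁).obj Δ.obj₁)) (h : n₀ + 1 = n₁ := by lia) :
    IsIso ((homologyFunctor C n₀).map Δ.mor₂) :=
  have : Mono ((homologyFunctor C n₀).map Δ.mor₂) :=
    (mono_homologyMap_mor₂_iff Δ hΔ n₀).2 (h₀.eq_of_src _ _)
  have : Epi ((homologyFunctor C n₀).map Δ.mor₂) :=
    (epi_homologyMap_mor₂_iff Δ hΔ n₀ n₁ h).2 (h₁.eq_of_tgt _ _)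
  isIso_of_mono_of_epi _

lemma isIso_δ (h₀ : IsZero ((homologyFunctor C n₀).obj Δ.obj₂))
    (h₁ : IsZero ((homologyFunctor C n₁).obj Δ.obj₂)) (h : n₀ + 1 = n₁ := by lia) :
    IsIso (δ Δ n₀ n₁ h) :=
  have : Mono (δ Δ n₀ n₁ h) := (exact₃ Δ hΔ n₀ n₁ h).mono_g (h₀.eq_of_src _ _)
  have : Epi (δ Δ n₀ n₁ h) := (exact₁ Δ hΔ n₀ n₁ h).epi_f (h₁.eq_of_tgt _ _)
  isIso_of_mono_of_epi _

lemma isZero_homology_obj₁ (h₀ : IsZero ((homologyFunctor C n₀).obj Δ.obj₃))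
    (h₁ : IsZero ((homologyFunctor C n₁).obj Δ.obj₂)) (h : n₀ + 1 = n₁ := by lia) :
    IsZero ((homologyFunctor C n₁).obj Δ.obj₁) :=
  (exact₁ Δ hΔ n₀ n₁ h).isZero_X₂ (h₀.eq_of_src _ _) (h₁.eq_of_tgt _ _)

lemma isZero_homology_obj₃ (h₀ : IsZero ((homologyFunctor C n₀).obj Δ.obj₂))
    (h₁ : IsZero ((homologyFunctor C n₁).obj Δ.obj₁)) (h : n₀ + 1 = n₁ := by lia) :
    IsZero ((homologyFunctor C n₀).obj Δ.obj₃) :=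
  (exact₃ Δ hΔ n₀ n₁ h).isZero_X₂ (h₀.eq_of_src _ _) (h₁.eq_of_tgt _ _)

end DerivedCategory.HomologySequence

open DerivedCategory.HomologySequence

variable {T e}

lemma Fc_of_Kcal0 {S : ShortComplex 𝒜} (hS : S.ShortExact) (h₁ : Fcal T e 2 S.X₁)
    (h₂ : Fcal T e 0 S.X₂) :
    Nonempty ((Fc T e 0).obj S.X₃ ≅ (Fc T e 0).obj S.X₂) ∧
      Nonempty ((Fc T e 1).obj S.X₃ ≅ (Fc T e 2).obj S.X₁) ∧
      IsZero ((Fc T e 2).obj S.X₃) := by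
  let Δ := e.functor.mapTriangle.obj hS.singleTriangle
  have hΔ : Δ ∈ distTriang _ := e.functor.map_distinguished _ hS.singleTriangle_distinguished
  have := isIso_homologyMap_mor₂ hΔ 0 1 (h₁ 0 (by norm_num)) (h₁ 1 (by norm_num))
  have := isIso_δ hΔ 1 2 (h₂ 1 (by norm_num)) (h₂ 2 (by norm_num))
  -- `(… :)` elaborates `asIso` without the expected `Fc`-type, which hides the `IsIso` instance.
  exact ⟨⟨(asIso ((homologyFunctor _ 0).map Δ.mor₂)).symm⟩, ⟨(asIso (δ Δ 1 2 rfl) :)⟩,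
    isZero_homology_obj₃ hΔ 2 3 (h₂ 2 (by norm_num)) (h₁ 3 (by norm_num))⟩

lemma Fc_of_Kcal2 {S : ShortComplex 𝒜} (hS : S.ShortExact) (h₂ : Fcal T e 2 S.X₂)
    (h₃ : Fcal T e 0 S.X₃) :
    IsZero ((Fc T e 0).obj S.X₁) ∧
      Nonempty ((Fc T e 1).obj S.X₁ ≅ (Fc T e 0).obj S.X₃) ∧
      Nonempty ((Fc T e 2).obj S.X₁ ≅ (Fc T e 2).obj S.X₂) := by
  let Δ := e.functor.mapTriangle.obj hS.singleTriangle
  have hΔ : Δ ∈ distTriang _ := e.functor.map_distinguished _ hS.singleTriangle_distinguished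
  have := isIso_δ hΔ 0 1 (h₂ 0 (by norm_num)) (h₂ 1 (by norm_num))
  have := isIso_homologyMap_mor₁ hΔ 1 2 (h₃ 1 (by norm_num)) (h₃ 2 (by norm_num))
  exact ⟨isZero_homology_obj₁ hΔ (-1) 0 (h₃ (-1) (by norm_num)) (h₂ 0 (by norm_num)),
    ⟨(asIso (δ Δ 0 1 rfl)).symm⟩, ⟨(asIso ((homologyFunctor _ 2).map Δ.mor₁) :)⟩⟩

variable (T e)

theorem Fc_of_Kcal0_and_Kcal2 :
    (∀ S : ShortComplex 𝒜, S.ShortExact → Fcal T e 2 S.X₁ → Fcal T e 0 S.X₂ →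
      Nonempty ((Fc T e 0).obj S.X₃ ≅ (Fc T e 0).obj S.X₂) ∧
      Nonempty ((Fc T e 1).obj S.X₃ ≅ (Fc T e 2).obj S.X₁) ∧
      IsZero ((Fc T e 2).obj S.X₃)) ∧
    (∀ S : ShortComplex 𝒜, S.ShortExact → Fcal T e 2 S.X₂ → Fcal T e 0 S.X₃ →
      IsZero ((Fc T e 0).obj S.X₁) ∧
      Nonempty ((Fc T e 1).obj S.X₁ ≅ (Fc T e 0).obj S.X₃) ∧
      Nonempty ((Fc T e 2).obj S.X₁ ≅ (Fc T e 2).obj S.X₂)) :=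
  ⟨fun _ => Fc_of_Kcal0, fun _ => Fc_of_Kcal2⟩

end
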